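/- Let (X,d) be a metric space, f : X → X and F,G : X → P_fb(X) with pairs {f,F} and {f,G} occasionally weakly compatible. Let Ψ : ℝ⁺ → ℝ⁺ be nondecreasing with Ψ(t) < t for all t > 0, let 0 < a ≤ 1 and p ≥ 1. Suppose δ^p(Fx,Gy) ≤ Ψ(a·d^p(fx,fy) + (1−a)·d^{p/2}(fy,Fx)·d^{p/2}(fx,Gy)) for all x,y ∈ X. Then there exists a unique w ∈ X with fw = w, w ∈ Fw and w ∈ Gw. -/
import Mathlib


open Metric

/-- δ(A,B) = sup {d(a,b) : a ∈ A, b ∈ B} -/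
noncomputable def setDelta {X : Type*} [MetricSpace X] (A B : Set X) : ℝ :=
  sSup {r | ∃ a ∈ A, ∃ b ∈ B, dist a b = r}

/-- The pair (f,F) is occasionally weakly compatible. -/
def OWC {X : Type*} [MetricSpace X] (f : X → X) (F : X → Set X) : Prop :=
  ∃ u, f u ∈ F u ∧ f '' F u ⊆ F (f u)

/-- F takes values in the nonempty bounded closed subsets of X. -/
def Pfb {X : Type*} [MetricSpace X] (F : X → Set X) : Prop :=
  ∀ x, (F x).Nonempty ∧ Bornology.IsBounded (F x) ∧ IsClosed (F x)

lemma dist_le_setDelta {X : Type*} [MetricSpace X] {A B : Set X}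
    (hA : Bornology.IsBounded A) (hB : Bornology.IsBounded B)
    {m n : X} (hm : m ∈ A) (hn : n ∈ B) : dist m n ≤ setDelta A B := by
  apply le_csSup
  · obtain ⟨C, hC⟩ := Metric.isBounded_iff.1 (hA.union hB)
    exact ⟨C, fun r ⟨x, hx, y, hy, hr⟩ =>
      hr ▸ hC (Set.mem_union_left _ hx) (Set.mem_union_right _ hy)⟩
  · exact ⟨m, hm, n, hn, rfl⟩

lemma key_lemma {X : Type*} [MetricSpace X] (f : X → X) (F G : X → Set X)
    (hF : Pfb F) (hG : Pfb G)
    (Ψ : ℝ → ℝ)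
    (hΨmono : ∀ s t, 0 ≤ s → s ≤ t → Ψ s ≤ Ψ t) (hΨ : ∀ t : ℝ, 0 < t → Ψ t < t)
    (a : ℝ) (ha0 : 0 < a) (ha1 : a ≤ 1) (p : ℝ) (hp : 1 ≤ p)
    (hcontr : ∀ x y : X,
      (setDelta (F x) (G y)) ^ p ≤
        Ψ (a * (dist (f x) (f y)) ^ p +
          (1 - a) * (infDist (f y) (F x)) ^ (p / 2) * (infDist (f x) (G y)) ^ (p / 2)))
    (x y m n : X) (hm : m ∈ F x) (hn : n ∈ G y)
    (h1 : dist (f x) (f y) ≤ dist m n)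
    (h2 : infDist (f y) (F x) ≤ dist m n)
    (h3 : infDist (f x) (G y) ≤ dist m n) : m = n := by
  by_contra hne
  have ht : 0 < dist m n := dist_pos.2 hne
  set t := dist m n with htdef
  have hp0 : (0:ℝ) ≤ p := by linarith
  have hp2 : (0:ℝ) ≤ p / 2 := by linarith
  have htp : 0 < t ^ p := Real.rpow_pos_of_pos ht p
  have hδ : t ≤ setDelta (F x) (G y) := dist_le_setDelta (hF x).2.1 (hG y).2.1 hm hn
  have h4 : t ^ p ≤ (setDelta (F x) (G y)) ^ p :=
    Real.rpow_le_rpow dist_nonneg hδ hp0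
  set e := infDist (f y) (F x) with hedef
  set g := infDist (f x) (G y) with hgdef
  have he0 : 0 ≤ e := infDist_nonneg
  have hg0 : 0 ≤ g := infDist_nonneg
  have hd : (dist (f x) (f y)) ^ p ≤ t ^ p := Real.rpow_le_rpow dist_nonneg h1 hp0
  have he : e ^ (p/2) ≤ t ^ (p/2) := Real.rpow_le_rpow he0 h2 hp2
  have hg : g ^ (p/2) ≤ t ^ (p/2) := Real.rpow_le_rpow hg0 h3 hp2
  have htt : t ^ (p/2) * t ^ (p/2) = t ^ p := by
    rw [← Real.rpow_add ht]; ring_nf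
  have harg0 : 0 ≤ a * (dist (f x) (f y)) ^ p + (1 - a) * e ^ (p/2) * g ^ (p/2) := by
    have hA : 0 ≤ a * (dist (f x) (f y)) ^ p :=
      mul_nonneg ha0.le (Real.rpow_nonneg dist_nonneg p)
    have hB : 0 ≤ (1 - a) * e ^ (p/2) * g ^ (p/2) :=
      mul_nonneg (mul_nonneg (by linarith) (Real.rpow_nonneg he0 _)) (Real.rpow_nonneg hg0 _)
    linarith
  have harg : a * (dist (f x) (f y)) ^ p + (1 - a) * e ^ (p/2) * g ^ (p/2) ≤ t ^ p := by
    have h5 : a * (dist (f x) (f y)) ^ p ≤ a * t ^ p :=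
      mul_le_mul_of_nonneg_left hd ha0.le
    have h6 : (1 - a) * e ^ (p/2) * g ^ (p/2) ≤ (1 - a) * (t ^ (p/2) * t ^ (p/2)) := by
      rw [mul_assoc]
      refine mul_le_mul_of_nonneg_left ?_ (by linarith)
      exact mul_le_mul he hg (Real.rpow_nonneg hg0 _) (Real.rpow_nonneg ht.le _)
    nlinarith
  have hc := hcontr x y
  have hΨle : Ψ (a * (dist (f x) (f y)) ^ p + (1 - a) * e ^ (p/2) * g ^ (p/2)) ≤ Ψ (t ^ p) :=
    hΨmono _ _ harg0 harg
  have hfinal := hΨ (t ^ p) htp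
  linarith

theorem stmt14 {X : Type*} [MetricSpace X] (f : X → X) (F G : X → Set X)
    (hF : Pfb F) (hG : Pfb G) (howc1 : OWC f F) (howc2 : OWC f G)
    (Ψ : ℝ → ℝ) (hΨ0 : ∀ t, 0 ≤ t → 0 ≤ Ψ t)
    (hΨmono : ∀ s t, 0 ≤ s → s ≤ t → Ψ s ≤ Ψ t) (hΨ : ∀ t : ℝ, 0 < t → Ψ t < t)
    (a : ℝ) (ha0 : 0 < a) (ha1 : a ≤ 1) (p : ℝ) (hp : 1 ≤ p)
    (hcontr : ∀ x y : X,
      (setDelta (F x) (G y)) ^ p ≤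
        Ψ (a * (dist (f x) (f y)) ^ p +
          (1 - a) * (infDist (f y) (F x)) ^ (p / 2) * (infDist (f x) (G y)) ^ (p / 2))) :
    ∃! w : X, f w = w ∧ w ∈ F w ∧ w ∈ G w := by
  obtain ⟨u, hu1, hu2⟩ := howc1
  obtain ⟨v, hv1, hv2⟩ := howc2
  have key := key_lemma f F G hF hG Ψ hΨmono hΨ a ha0 ha1 p hp hcontr
  -- Step 1: f u = f v
  have huv : f u = f v := by
    apply key u v (f u) (f v) hu1 hv1 le_rfl
    · rw [dist_comm]; exact infDist_le_dist_of_mem hu1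
    · exact infDist_le_dist_of_mem hv1
  set w := f u with hwdef
  -- f w ∈ F w and f w ∈ G w
  have hfwF : f w ∈ F w := hu2 ⟨f u, hu1, rfl⟩
  have hfwG : f w ∈ G w := by
    rw [huv] at hwdef ⊢
    exact hv2 ⟨f v, hv1, rfl⟩
  -- Step 2: f w = w, via key with x = u, y = w, m = w ∈ F u, n = f w ∈ G w
  have hww : w = f w := by
    apply key u w w (f w) hu1 hfwG
    · rw [← hwdef]
    · rw [dist_comm]
      exact infDist_le_dist_of_mem hu1
    · rw [← hwdef]
      exact infDist_le_dist_of_mem hfwG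
  have hwF : w ∈ F w := by rw [← hww] at hfwF; exact hfwF
  have hwG : w ∈ G w := by rw [← hww] at hfwG; exact hfwG
  refine ⟨w, ⟨hww.symm, hwF, hwG⟩, ?_⟩
  rintro z ⟨hz1, hz2, hz3⟩
  apply key z w z w hz2 hwG
  · rw [hz1, ← hww]
  · rw [← hww, dist_comm]
    exact infDist_le_dist_of_mem hz2
  · rw [hz1]
    exact infDist_le_dist_of_mem hwG
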